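/- For every nonnegative integer n, S_n^{(r,k)}(x|a_1,…,a_r) = Σ_{m=0}^n ( Σ_{l=m}^n S_2(l,m) C(n,l) S_{n−l}^{(r,k)}(a_1,…,a_r) ) (x)_m, as an identity of polynomials in x, where (x)_m = x(x−1)⋯(x−m+1) is the falling factorial with (x)_0 = 1. -/

import Mathlib

open PowerSeries Finset

/-- The formal power series `e^{c·t}` over a commutative `ℚ`-algebra `R`. -/
noncomputable def expS {R : Type*} [CommRing R] [Algebra ℚ R] (c : R) : PowerSeries R :=
  PowerSeries.rescale c (PowerSeries.exp R)

/-- The formal power series `Li_k(1 - e^{-t})` over `ℂ`, where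
`Li_k(z) = ∑_{m ≥ 1} z^m / m^k` is the `k`-th polylogarithm.  Since `1 - e^{-t}`
has order `1`, the coefficient of `t^n` only involves the terms with `1 ≤ m ≤ n`. -/
noncomputable def Lik (k : ℤ) : PowerSeries ℂ :=
  PowerSeries.mk fun n => ∑ m ∈ Finset.Icc 1 n,
    ((m : ℂ) ^ k)⁻¹ * PowerSeries.coeff n ((1 - expS (-1 : ℂ)) ^ m)

/-- The exponential generating function `∑_n p n · t^n / n!` of a sequence of
complex polynomials. -/
noncomputable def egf (p : ℕ → Polynomial ℂ) : PowerSeries (Polynomial ℂ) :=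
  PowerSeries.mk fun n => ((n.factorial : ℂ))⁻¹ • p n

/-!
Setting `x = 0` in the generating function and cancelling the nonzero `x`-free factor
`∏ⱼ (e^{aⱼ t} - 1) (1 - e^{-t})` shows `∑ₙ Sₙ(x) tⁿ/n! = e^{xt} ∑ₙ Sₙ(0) tⁿ/n!`, that is
`Sₙ(x) = ∑ₗ C(n,l) Sₙ₋ₗ(0) xˡ`. Expanding `xˡ = ∑ₘ S₂(l,m) (x)ₘ` and exchanging the two sums gives
the formula. The expansion of `xˡ` is a polynomial identity, so it suffices to check it at the
natural numbers `N`, where it is the coefficient of `tˡ` in `e^{Nt} = ((e^t - 1) + 1)^N`.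
-/

section expS

variable {R : Type*} [CommRing R] [Algebra ℚ R]

lemma coeff_expS (c : R) (n : ℕ) :
    coeff n (expS c) = c ^ n * algebraMap ℚ R (1 / n.factorial) := by
  simp [expS, coeff_rescale, coeff_exp]

lemma map_expS {S : Type*} [CommRing S] [Algebra ℚ S] (f : R →+* S) (c : R) :
    map f (expS c) = expS (f c) := by
  ext n : 1
  simp [coeff_expS, f.map_rat_algebraMap]

lemma expS_zero : expS (0 : R) = 1 := by
  simp [expS]

lemma expS_sub_one_ne_zero {c : R} (hc : c ≠ 0) : expS c - 1 ≠ 0 := by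
  intro h
  exact hc (by simpa [coeff_expS] using congrArg (coeff 1) h)

end expS

lemma eq_expS_X_mul_map_C_map_eval_zero {R : Type*} [CommRing R] [IsDomain R] [Algebra ℚ R]
    {A D : PowerSeries R} {F : PowerSeries (Polynomial R)} (hD : D ≠ 0)
    (h : map Polynomial.C A * expS Polynomial.X = map Polynomial.C D * F) :
    F = expS Polynomial.X * map Polynomial.C (map (Polynomial.evalRingHom 0) F) := by
  have hmap : ∀ G : PowerSeries R, map (Polynomial.evalRingHom 0) (map Polynomial.C G) = G := by
    intro G
    ext n
    simp
  have hA : A = D * map (Polynomial.evalRingHom 0) F := by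
    simpa [hmap, map_expS, expS_zero] using congrArg (map (Polynomial.evalRingHom 0)) h
  have hCD : map Polynomial.C D ≠ 0 :=
    (map_ne_zero_iff _ (map_injective _ Polynomial.C_injective)).mpr hD
  apply mul_left_cancel₀ hCD
  rw [← h, hA, map_mul]
  ring

lemma coeff_egf (p : ℕ → Polynomial ℂ) (n : ℕ) :
    coeff n (egf p) = ((n.factorial : ℂ))⁻¹ • p n :=
  coeff_mk _ _

lemma egf_injective : Function.Injective egf := by
  intro p q h
  funext n
  have hn : ((n.factorial : ℂ))⁻¹ ≠ 0 := inv_ne_zero (Nat.cast_ne_zero.mpr n.factorial_ne_zero)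
  simpa [coeff_egf, hn] using congrArg (coeff n) h

lemma expS_X_eq_egf : expS (Polynomial.X : Polynomial ℂ) = egf fun n => Polynomial.X ^ n := by
  ext n : 1
  rw [coeff_expS, coeff_egf, Polynomial.algebraMap_apply, Polynomial.smul_eq_C_mul, mul_comm]
  simp

lemma map_C_map_eval_zero_egf (p : ℕ → Polynomial ℂ) :
    map Polynomial.C (map (Polynomial.evalRingHom 0) (egf p))
      = egf fun n => Polynomial.C ((p n).eval 0) := by
  ext n : 1
  simp only [coeff_map, coeff_egf, Polynomial.coe_evalRingHom, Polynomial.eval_C,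
    map_mul, Polynomial.smul_eq_C_mul]

lemma egf_mul (p q : ℕ → Polynomial ℂ) :
    egf p * egf q
      = egf fun n => ∑ l ∈ range (n + 1), (n.choose l : ℂ) • (p l * q (n - l)) := by
  ext n : 1
  rw [coeff_mul, Finset.Nat.sum_antidiagonal_eq_sum_range_succ_mk, coeff_egf, smul_sum]
  refine sum_congr rfl fun l hl => ?_
  have hln : l ≤ n := Nat.lt_succ_iff.mp (mem_range.mp hl)
  simp only [coeff_egf, smul_mul_smul, smul_smul, Nat.cast_choose ℂ hln]
  have hn : (n.factorial : ℂ) ≠ 0 := Nat.cast_ne_zero.mpr n.factorial_ne_zero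
  congr 1
  field_simp

def IsStirlingSecond (S2 : ℕ → ℕ → ℂ) : Prop :=
  ∀ m, (exp ℂ - 1) ^ m = (m.factorial : ℂ) • mk (fun l => S2 l m / (l.factorial : ℂ))

namespace IsStirlingSecond

variable {S2 : ℕ → ℕ → ℂ} (hS2 : IsStirlingSecond S2)
include hS2

lemma coeff_exp_sub_one_pow (l m : ℕ) :
    coeff l ((exp ℂ - 1) ^ m) = m.factorial * S2 l m / l.factorial := by
  rw [hS2 m, coeff_smul, coeff_mk, smul_eq_mul, mul_div_assoc]

lemma eq_zero_of_lt {l m : ℕ} (hlm : l < m) : S2 l m = 0 := by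
  have hX : X ^ m ∣ (exp ℂ - 1) ^ m :=
    pow_dvd_pow_of_dvd (X_dvd_iff.mpr (by simp)) m
  have h := X_pow_dvd_iff.mp hX l hlm
  rw [hS2.coeff_exp_sub_one_pow] at h
  simpa [Nat.factorial_ne_zero] using h

lemma natCast_pow_eq_sum (N n : ℕ) :
    (N : ℂ) ^ n = ∑ m ∈ range (N + 1), S2 n m * N.descFactorial m := by
  have hbinom : exp ℂ ^ N = ∑ m ∈ range (N + 1), N.choose m • (exp ℂ - 1) ^ m := by
    simpa [nsmul_eq_mul, mul_comm] using add_pow (exp ℂ - 1) 1 N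
  have h := congrArg (coeff n) hbinom
  simp only [exp_pow_eq_rescale_exp, coeff_rescale, coeff_exp, map_sum, map_nsmul,
    hS2.coeff_exp_sub_one_pow] at h
  simp only [nsmul_eq_mul, one_div, map_inv₀, map_natCast] at h
  have hn : (n.factorial : ℂ) ≠ 0 := Nat.cast_ne_zero.mpr n.factorial_ne_zero
  rw [(mul_inv_eq_iff_eq_mul₀ hn).mp h, sum_mul]
  refine sum_congr rfl fun m _ => ?_
  rw [Nat.descFactorial_eq_factorial_mul_choose]
  push_cast
  field_simp

lemma X_pow_eq_sum (n : ℕ) :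
    (Polynomial.X : Polynomial ℂ) ^ n
      = ∑ m ∈ range (n + 1), Polynomial.C (S2 n m) * descPochhammer ℂ m := by
  refine Polynomial.eq_of_infinite_eval_eq _ _ ((Set.Ici_infinite n).image
    Nat.cast_injective.injOn |>.mono ?_)
  rintro _ ⟨N, hN, rfl⟩
  have hsub : range (n + 1) ⊆ range (N + 1) := range_subset_range.mpr (by simpa using hN)
  simp only [Set.mem_ofPred_eq, Polynomial.eval_pow, Polynomial.eval_X, Polynomial.eval_finsetSum,
    Polynomial.eval_mul, Polynomial.eval_C, descPochhammer_eval_eq_descFactorial,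
    hS2.natCast_pow_eq_sum]
  refine (sum_subset hsub fun m _ hmn => ?_).symm
  rw [hS2.eq_zero_of_lt (by simpa using hmn), zero_mul]

lemma sum_choose_smul_X_pow_mul_C (b : ℕ → ℂ) (n : ℕ) :
    ∑ l ∈ range (n + 1), (n.choose l : ℂ) • (Polynomial.X ^ l * Polynomial.C (b (n - l)))
      = ∑ m ∈ range (n + 1),
          Polynomial.C (∑ l ∈ Icc m n, S2 l m * n.choose l * b (n - l)) * descPochhammer ℂ m := by
  set f : ℕ → ℕ → Polynomial ℂ := fun m l =>
    Polynomial.C (S2 l m * n.choose l * b (n - l)) * descPochhammer ℂ m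
  calc _ = ∑ l ∈ Ico 0 (n + 1), ∑ m ∈ Ico 0 (l + 1), f m l := by
        refine sum_congr (range_eq_Ico _) fun l _ => ?_
        rw [hS2.X_pow_eq_sum, ← range_eq_Ico, sum_mul, smul_sum]
        refine sum_congr rfl fun m _ => ?_
        simp only [f, Polynomial.smul_eq_C_mul, map_mul, map_natCast]
        ring
    _ = ∑ m ∈ Ico 0 (n + 1), ∑ l ∈ Ico m (n + 1), f m l := (sum_Ico_Ico_comm 0 (n + 1) f).symm
    _ = _ := by
        rw [← range_eq_Ico]
        simp only [f, Ico_add_one_right_eq_Icc, ← sum_mul, ← map_sum]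

end IsStirlingSecond

lemma prod_range_X_sub_natCast_eq_descPochhammer (R : Type*) [CommRing R] (m : ℕ) :
    ∏ i ∈ range m, (Polynomial.X - Polynomial.C (i : R)) = descPochhammer R m := by
  induction m with
  | zero => simp
  | succ m ih => rw [prod_range_succ, ih, descPochhammer_succ_right, map_natCast]

theorem stmt9_general (r : ℕ) (k : ℤ) (a : Fin r → ℂ) (ha : ∀ j, a j ≠ 0)
    (S : ℕ → Polynomial ℂ) (S2 : ℕ → ℕ → ℂ)
    -- `S n` is the mixed-type polynomial `S_n^{(r,k)}(x|a_1,…,a_r)`: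
    (hS : (PowerSeries.X : PowerSeries (Polynomial ℂ)) ^ r
        * PowerSeries.map Polynomial.C (Lik k) * expS Polynomial.X
        = (∏ j, (expS (Polynomial.C (a j)) - 1)) * (1 - expS (-1 : Polynomial ℂ)) * egf S)
    -- `S2 l m` is the Stirling number of the second kind, defined by
    -- `(e^t - 1)^m = m! ∑_{l ≥ m} S2(l,m) t^l / l!`:
    (hS2 : ∀ m, (PowerSeries.exp ℂ - 1) ^ m
        = (m.factorial : ℂ) • PowerSeries.mk (fun l => S2 l m / (l.factorial : ℂ)))
    (n : ℕ) :
    S n = ∑ m ∈ Finset.range (n + 1),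
      Polynomial.C (∑ l ∈ Finset.Icc m n, S2 l m * (n.choose l : ℂ) * (S (n - l)).eval 0)
        * ∏ i ∈ Finset.range m, (Polynomial.X - Polynomial.C (i : ℂ)) := by
  have hD : (∏ j, (expS (a j) - 1)) * (1 - expS (-1 : ℂ)) ≠ 0 :=
    mul_ne_zero (prod_ne_zero_iff.mpr fun j _ => expS_sub_one_ne_zero (ha j))
      (by rw [← neg_sub]; exact neg_ne_zero.mpr (expS_sub_one_ne_zero (by norm_num)))
  have happell := eq_expS_X_mul_map_C_map_eval_zero (A := X ^ r * Lik k) hD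
    (by simpa [map_expS] using hS)
  rw [map_C_map_eval_zero_egf, expS_X_eq_egf, egf_mul] at happell
  rw [congrFun (egf_injective happell) n,
    IsStirlingSecond.sum_choose_smul_X_pow_mul_C hS2 fun l => (S l).eval 0]
  simp only [prod_range_X_sub_natCast_eq_descPochhammer]

theorem stmt9 (r : ℕ) (hr : 0 < r) (k : ℤ) (a : Fin r → ℂ) (ha : ∀ j, a j ≠ 0)
    (S : ℕ → Polynomial ℂ) (S2 : ℕ → ℕ → ℂ)
    -- `S n` is the mixed-type polynomial `S_n^{(r,k)}(x|a_1,…,a_r)`: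
    (hS : (PowerSeries.X : PowerSeries (Polynomial ℂ)) ^ r
        * PowerSeries.map Polynomial.C (Lik k) * expS Polynomial.X
        = (∏ j, (expS (Polynomial.C (a j)) - 1)) * (1 - expS (-1 : Polynomial ℂ)) * egf S)
    -- `S2 l m` is the Stirling number of the second kind, defined by
    -- `(e^t - 1)^m = m! ∑_{l ≥ m} S2(l,m) t^l / l!`:
    (hS2 : ∀ m, (PowerSeries.exp ℂ - 1) ^ m
        = (m.factorial : ℂ) • PowerSeries.mk (fun l => S2 l m / (l.factorial : ℂ)))
    (n : ℕ) :
    S n = ∑ m ∈ Finset.range (n + 1),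
      Polynomial.C (∑ l ∈ Finset.Icc m n, S2 l m * (n.choose l : ℂ) * (S (n - l)).eval 0)
        * ∏ i ∈ Finset.range m, (Polynomial.X - Polynomial.C (i : ℂ)) :=
  stmt9_general r k a ha S S2 hS hS2 n
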